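/- arXiv:2503.06502 — 3 statements merged into one kernel-verified Lean document; each statement's English description precedes it below -/
import Mathlib

section
/- Let q_t(x,y) denote the transition probabilities of the continuous-time simple symmetric random walk on Z^1 with generator Gh(x) = ∑_{y: |y−x|=1} (h(y)−h(x)). Then for every s > 0, ∑_{x∈Z} (∫_0^s (q_u(O,x) − q_u(O,x+1)) du)^2 = ∫_0^s q_u(O,O) du − ∫_s^{2s} q_u(O,O) du, where O = 0. -/
/-!
Write `∇p_u(x) = q_u(0,x) - q_u(0,x+1)`. The left side is the double integral over `[0,s]²` of
`∑_x ∇p_u(x) ∇p_v(x)`. Summation by parts, symmetry and Chapman–Kolmogorov turn this sum into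
`2 q_{u+v}(0,0) - q_{u+v}(0,-1) - q_{u+v}(0,1)`, which by the forward equation is
`-(d/dv) q_{u+v}(0,0)`; integrating in `v` leaves `q_u(0,0) - q_{u+s}(0,0)`, and integrating in `u`
gives the right side. Positivity and `∑_y q_t(x,y) = 1` bound everything needed to exchange the
sums and integrals.
-/

open MeasureTheory intervalIntegral

theorem Summable.mul_of_abs_le {ι : Type*} {a c : ι → ℝ} (ha : Summable a) {C : ℝ}
    (hc : ∀ i, |c i| ≤ C) : Summable fun i => a i * c i :=
  (ha.abs.mul_right C).of_norm_bounded fun i => by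
    rw [Real.norm_eq_abs, abs_mul]
    exact mul_le_mul_of_nonneg_left (hc i) (abs_nonneg _)

theorem summable_of_tsum_eq_one {ι : Type*} {f : ι → ℝ} (h : ∑' i, f i = 1) : Summable f := by
  by_contra hf
  simp [tsum_eq_zero_of_not_summable hf] at h

theorem le_one_of_tsum_eq_one {ι : Type*} {f : ι → ℝ} (hf : ∀ i, 0 ≤ f i) (h : ∑' i, f i = 1)
    (i : ι) : f i ≤ 1 :=
  h ▸ (summable_of_tsum_eq_one h).le_tsum i fun j _ => hf j

theorem tsum_sub_shift_mul {a c : ℤ → ℝ} (ha : Summable a) {C : ℝ} (hc : ∀ x, |c x| ≤ C) :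
    ∑' x, (a x - a (x + 1)) * c x = ∑' x, a x * (c x - c (x - 1)) := by
  have ha' : Summable fun x => a (x + 1) := (Equiv.addRight (1 : ℤ)).summable_iff.mpr ha
  have hshift : ∑' x, a (x + 1) * c x = ∑' x, a x * c (x - 1) := by
    simpa using (Equiv.addRight (1 : ℤ)).tsum_eq fun x => a x * c (x - 1)
  simp only [sub_mul, mul_sub]
  rw [(ha.mul_of_abs_le hc).tsum_sub (ha'.mul_of_abs_le hc),
    (ha.mul_of_abs_le hc).tsum_sub (ha.mul_of_abs_le fun x => hc (x - 1)), hshift]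

theorem summable_intervalIntegral_of_sum_le {ι : Type*} {p : ℝ → ι → ℝ} {a b C : ℝ}
    (hab : a ≤ b) (hp : ∀ i, IntervalIntegrable (fun u => p u i) volume a b)
    (hp_nonneg : ∀ u ∈ Set.Icc a b, ∀ i, 0 ≤ p u i)
    (hp_sum : ∀ u ∈ Set.Icc a b, ∀ T : Finset ι, ∑ i ∈ T, p u i ≤ C) :
    Summable fun i => ∫ u in a..b, p u i := by
  refine summable_of_sum_le (c := C * (b - a))
    (fun i => integral_nonneg hab fun u hu => hp_nonneg u hu i) fun T => ?_
  rw [← integral_finsetSum fun i _ => hp i]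
  calc ∫ u in a..b, ∑ i ∈ T, p u i ≤ ∫ _ in a..b, C :=
        integral_mono_on hab
          (by simpa only [Finset.sum_fn] using IntervalIntegrable.sum T fun i _ => hp i)
          intervalIntegrable_const fun u hu => hp_sum u hu T
    _ = C * (b - a) := by simp [mul_comm]

theorem summable_intervalIntegral_abs_sub_shift {p : ℝ → ℤ → ℝ} {a b C : ℝ}
    (hab : a ≤ b) (hp : ∀ x, IntervalIntegrable (fun u => p u x) volume a b)
    (hp_nonneg : ∀ u ∈ Set.Icc a b, ∀ x, 0 ≤ p u x)
    (hp_sum : ∀ u ∈ Set.Icc a b, ∀ T : Finset ℤ, ∑ x ∈ T, p u x ≤ C) :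
    Summable fun x => ∫ u in a..b, |p u x - p u (x + 1)| := by
  have hA := summable_intervalIntegral_of_sum_le hab hp hp_nonneg hp_sum
  refine Summable.of_nonneg_of_le (fun x => integral_nonneg hab fun _ _ => abs_nonneg _)
    (fun x => ?_) (hA.add ((Equiv.addRight (1 : ℤ)).summable_iff.mpr hA))
  change _ ≤ (∫ u in a..b, p u x) + ∫ u in a..b, p u (x + 1)
  rw [← integral_add (hp x) (hp (x + 1))]
  refine integral_mono_on hab ((hp x).sub (hp (x + 1))).abs ((hp x).add (hp (x + 1)))
    fun u hu => ?_
  have h₁ := hp_nonneg u hu x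
  have h₂ := hp_nonneg u hu (x + 1)
  exact (abs_sub _ _).trans (by rw [abs_of_nonneg h₁, abs_of_nonneg h₂])

theorem intervalIntegral_tsum_mul_of_summable_integral_abs {ι : Type*} [Countable ι] {f : ℝ → ι → ℝ}
    {c : ι → ℝ} {a b C : ℝ} (hab : a ≤ b)
    (hf : ∀ i, IntervalIntegrable (fun u => f u i) volume a b)
    (hf_sum : Summable fun i => ∫ u in a..b, |f u i|) (hc : ∀ i, |c i| ≤ C) :
    ∫ u in a..b, ∑' i, f u i * c i = ∑' i, (∫ u in a..b, f u i) * c i := by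
  simp only [integral_of_le hab, ← MeasureTheory.integral_mul_const] at hf_sum ⊢
  refine (integral_tsum_of_summable_integral_norm (fun i => (hf i).1.mul_const (c i)) ?_).symm
  refine (hf_sum.mul_right C).of_nonneg_of_le
    (fun i => integral_nonneg fun _ => norm_nonneg _) fun i => ?_
  simp only [norm_mul, Real.norm_eq_abs, MeasureTheory.integral_mul_const]
  exact mul_le_mul_of_nonneg_left (hc i) (integral_nonneg fun _ => abs_nonneg _)

namespace TransitionKernel

variable {q : ℝ → ℤ → ℤ → ℝ}

theorem intervalIntegrable_of_hasDerivAt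
    (hderiv : ∀ t, 0 ≤ t → ∀ x y : ℤ,
      HasDerivAt (fun r => q r x y) (q t x (y - 1) + q t x (y + 1) - 2 * q t x y) t)
    {a b : ℝ} (ha : 0 ≤ a) (hb : 0 ≤ b) (x y : ℤ) :
    IntervalIntegrable (fun r => q r x y) volume a b :=
  ContinuousOn.intervalIntegrable fun t ht =>
    (hderiv t ((le_min ha hb).trans ht.1) x y).continuousAt.continuousWithinAt

theorem abs_sub_le_one
    (hpos : ∀ t, 0 ≤ t → ∀ x y : ℤ, 0 ≤ q t x y)
    (hker : ∀ t, 0 ≤ t → ∀ x : ℤ, ∑' y : ℤ, q t x y = 1)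
    {t : ℝ} (ht : 0 ≤ t) (x y z w : ℤ) : |q t x y - q t z w| ≤ 1 := by
  have hle x y : q t x y ≤ 1 := le_one_of_tsum_eq_one (hpos t ht x) (hker t ht x) y
  exact abs_sub_le_of_nonneg_of_le (hpos t ht x y) (hle x y) (hpos t ht z w) (hle z w)

-- For `t > 0`, `r ↦ q r x 0` and `r ↦ q r 0 x` agree near `t`, so symmetry turns the forward
-- equation in the second variable into one in the first.
theorem add_neighbors_symm
    (hsym : ∀ t, 0 ≤ t → ∀ x y : ℤ, q t x y = q t y x)
    (hderiv : ∀ t, 0 ≤ t → ∀ x y : ℤ,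
      HasDerivAt (fun r => q r x y) (q t x (y - 1) + q t x (y + 1) - 2 * q t x y) t)
    {t : ℝ} (ht : 0 < t) (x : ℤ) :
    q t 0 (x - 1) + q t 0 (x + 1) = q t x (-1) + q t x 1 := by
  have hnear : (fun r => q r 0 x) =ᶠ[nhds t] fun r => q r x 0 :=
    Filter.eventuallyEq_of_mem (Ioi_mem_nhds ht) fun r hr => hsym r (le_of_lt hr) 0 x
  have h := (hderiv t ht.le 0 x).unique ((hderiv t ht.le x 0).congr_of_eventuallyEq hnear)
  norm_num [hsym t ht.le 0 x] at h
  linarith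

theorem tsum_sub_shift_mul_sub_shift
    (hpos : ∀ t, 0 ≤ t → ∀ x y : ℤ, 0 ≤ q t x y)
    (hsym : ∀ t, 0 ≤ t → ∀ x y : ℤ, q t x y = q t y x)
    (hker : ∀ t, 0 ≤ t → ∀ x : ℤ, ∑' y : ℤ, q t x y = 1)
    (hCK : ∀ u v, 0 ≤ u → 0 ≤ v → ∀ x z : ℤ,
      q (u + v) x z = ∑' y : ℤ, q u x y * q v y z)
    (hderiv : ∀ t, 0 ≤ t → ∀ x y : ℤ,
      HasDerivAt (fun r => q r x y) (q t x (y - 1) + q t x (y + 1) - 2 * q t x y) t)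
    {u v : ℝ} (hu : 0 ≤ u) (hv : 0 < v) :
    ∑' x : ℤ, (q u 0 x - q u 0 (x + 1)) * (q v 0 x - q v 0 (x + 1))
      = 2 * q (u + v) 0 0 - q (u + v) 0 (-1) - q (u + v) 0 1 := by
  have hsum : Summable fun x => q u 0 x := summable_of_tsum_eq_one (hker u hu 0)
  have hsum_mul : ∀ z, Summable fun x => q u 0 x * q v x z := fun z =>
    hsum.mul_of_abs_le fun x => (abs_of_nonneg (hpos v hv.le x z)).trans_le
      (le_one_of_tsum_eq_one (hpos v hv.le x) (hker v hv.le x) z)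
  rw [tsum_sub_shift_mul hsum fun x => abs_sub_le_one hpos hker hv.le 0 x 0 (x + 1)]
  calc ∑' x, q u 0 x * (q v 0 x - q v 0 (x + 1) - (q v 0 (x - 1) - q v 0 (x - 1 + 1)))
      = ∑' x, (2 * (q u 0 x * q v x 0) - q u 0 x * q v x (-1) - q u 0 x * q v x 1) :=
        tsum_congr fun x => by
          rw [sub_add_cancel]
          linear_combination
            q u 0 x * (2 * hsym v hv.le 0 x - add_neighbors_symm hsym hderiv hv x)
    _ = 2 * q (u + v) 0 0 - q (u + v) 0 (-1) - q (u + v) 0 1 := by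
      rw [(((hsum_mul 0).mul_left 2).sub (hsum_mul (-1))).tsum_sub (hsum_mul 1),
        ((hsum_mul 0).mul_left 2).tsum_sub (hsum_mul (-1)), tsum_mul_left,
        hCK u v hu hv.le, hCK u v hu hv.le, hCK u v hu hv.le]

theorem integral_neg_laplacian_comp_add_right
    (hderiv : ∀ t, 0 ≤ t → ∀ x y : ℤ,
      HasDerivAt (fun r => q r x y) (q t x (y - 1) + q t x (y + 1) - 2 * q t x y) t)
    {u s : ℝ} (hu : 0 ≤ u) (hs : 0 ≤ s) :
    ∫ v in (0 : ℝ)..s, (2 * q (v + u) 0 0 - q (v + u) 0 (-1) - q (v + u) 0 1)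
      = q u 0 0 - q (s + u) 0 0 := by
  have hsu : 0 ≤ s + u := add_nonneg hs hu
  rw [integral_comp_add_right (fun t => 2 * q t 0 0 - q t 0 (-1) - q t 0 1), zero_add,
    integral_eq_sub_of_hasDerivAt (f := fun t => -q t 0 0)]
  · ring
  · intro t ht
    have ht0 : 0 ≤ t := (le_min hu hsu).trans ht.1
    convert (hderiv t ht0 0 0).fun_neg using 1
    norm_num
    ring
  · have hint := intervalIntegrable_of_hasDerivAt hderiv hu hsu
    exact (((hint 0 0).const_mul 2).sub (hint 0 (-1))).sub (hint 0 1)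

theorem summable_integral_abs_sub_shift
    (hpos : ∀ t, 0 ≤ t → ∀ x y : ℤ, 0 ≤ q t x y)
    (hker : ∀ t, 0 ≤ t → ∀ x : ℤ, ∑' y : ℤ, q t x y = 1)
    (hderiv : ∀ t, 0 ≤ t → ∀ x y : ℤ,
      HasDerivAt (fun r => q r x y) (q t x (y - 1) + q t x (y + 1) - 2 * q t x y) t)
    {s : ℝ} (hs : 0 ≤ s) :
    Summable fun x : ℤ => ∫ u in (0 : ℝ)..s, |q u 0 x - q u 0 (x + 1)| :=
  summable_intervalIntegral_abs_sub_shift hs (intervalIntegrable_of_hasDerivAt hderiv le_rfl hs 0)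
    (fun u hu => hpos u hu.1 0) fun u hu T =>
      hker u hu.1 0 ▸ (summable_of_tsum_eq_one (hker u hu.1 0)).sum_le_tsum T
        fun x _ => hpos u hu.1 0 x

theorem tsum_sub_shift_mul_integral_sub_shift
    (hpos : ∀ t, 0 ≤ t → ∀ x y : ℤ, 0 ≤ q t x y)
    (hsym : ∀ t, 0 ≤ t → ∀ x y : ℤ, q t x y = q t y x)
    (hker : ∀ t, 0 ≤ t → ∀ x : ℤ, ∑' y : ℤ, q t x y = 1)
    (hCK : ∀ u v, 0 ≤ u → 0 ≤ v → ∀ x z : ℤ,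
      q (u + v) x z = ∑' y : ℤ, q u x y * q v y z)
    (hderiv : ∀ t, 0 ≤ t → ∀ x y : ℤ,
      HasDerivAt (fun r => q r x y) (q t x (y - 1) + q t x (y + 1) - 2 * q t x y) t)
    {s u : ℝ} (hs : 0 ≤ s) (hu : 0 < u) :
    ∑' x : ℤ, (q u 0 x - q u 0 (x + 1)) * ∫ v in (0 : ℝ)..s, (q v 0 x - q v 0 (x + 1))
      = q u 0 0 - q (s + u) 0 0 := by
  have hint := intervalIntegrable_of_hasDerivAt hderiv le_rfl hs
  calc ∑' x : ℤ, (q u 0 x - q u 0 (x + 1)) * ∫ v in (0 : ℝ)..s, (q v 0 x - q v 0 (x + 1))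
      = ∑' x : ℤ, (∫ v in (0 : ℝ)..s, (q v 0 x - q v 0 (x + 1))) * (q u 0 x - q u 0 (x + 1)) :=
        tsum_congr fun _ => mul_comm _ _
    _ = ∫ v in (0 : ℝ)..s, ∑' x : ℤ, (q v 0 x - q v 0 (x + 1)) * (q u 0 x - q u 0 (x + 1)) :=
        (intervalIntegral_tsum_mul_of_summable_integral_abs hs
          (fun x => (hint 0 x).sub (hint 0 (x + 1)))
          (summable_integral_abs_sub_shift hpos hker hderiv hs)
          fun x => abs_sub_le_one hpos hker hu.le 0 x 0 (x + 1)).symm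
    _ = ∫ v in (0 : ℝ)..s, (2 * q (v + u) 0 0 - q (v + u) 0 (-1) - q (v + u) 0 1) :=
        integral_congr fun v hv => tsum_sub_shift_mul_sub_shift hpos hsym hker hCK hderiv
          (Set.uIcc_of_le hs ▸ hv).1 hu
    _ = q u 0 0 - q (s + u) 0 0 := integral_neg_laplacian_comp_add_right hderiv hu.le hs

end TransitionKernel

open TransitionKernel

theorem stmt2_general
    (q : ℝ → ℤ → ℤ → ℝ)
    (hpos : ∀ t, 0 ≤ t → ∀ x y : ℤ, 0 ≤ q t x y)
    (hsym : ∀ t, 0 ≤ t → ∀ x y : ℤ, q t x y = q t y x)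
    (hker : ∀ t, 0 ≤ t → ∀ x : ℤ, ∑' y : ℤ, q t x y = 1)
    (hCK : ∀ u v, 0 ≤ u → 0 ≤ v → ∀ x z : ℤ,
      q (u + v) x z = ∑' y : ℤ, q u x y * q v y z)
    (hderiv : ∀ t, 0 ≤ t → ∀ x y : ℤ,
      HasDerivAt (fun r => q r x y) (q t x (y - 1) + q t x (y + 1) - 2 * q t x y) t)
    (s : ℝ) (hs : 0 < s) :
    ∑' x : ℤ, (∫ u in (0:ℝ)..s, (q u 0 x - q u 0 (x + 1))) ^ 2
      = (∫ u in (0:ℝ)..s, q u 0 0) - ∫ u in s..(2 * s), q u 0 0 := by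
  have hint := intervalIntegrable_of_hasDerivAt hderiv le_rfl hs.le
  have hF_le (x : ℤ) : |∫ u in (0:ℝ)..s, (q u 0 x - q u 0 (x + 1))| ≤ s := by
    have h := norm_integral_le_of_norm_le_const (C := 1)
      (f := fun u => q u 0 x - q u 0 (x + 1)) fun u hu =>
        abs_sub_le_one hpos hker (Set.uIoc_of_le hs.le ▸ hu).1.le 0 x 0 (x + 1)
    rwa [one_mul, sub_zero, abs_of_pos hs] at h
  have hshift : IntervalIntegrable (fun u => q (s + u) 0 0) volume 0 s := by
    simpa using
      (intervalIntegrable_of_hasDerivAt hderiv hs.le (add_nonneg hs.le hs.le) 0 0).comp_add_left s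
  simp only [sq]
  rw [← intervalIntegral_tsum_mul_of_summable_integral_abs hs.le
      (fun x => (hint 0 x).sub (hint 0 (x + 1)))
      (summable_integral_abs_sub_shift hpos hker hderiv hs.le) hF_le,
    integral_congr_ae (g := fun u => q u 0 0 - q (s + u) 0 0) (Filter.Eventually.of_forall
      fun u hu => tsum_sub_shift_mul_integral_sub_shift hpos hsym hker hCK hderiv hs.le
        (Set.uIoc_of_le hs.le ▸ hu).1),
    integral_sub (hint 0 0) hshift, integral_comp_add_left (fun u => q u 0 0), add_zero, ← two_mul]

/-- For the transition probabilities `q_t` of the continuous-time simple symmetric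
random walk on ℤ (characterized by the forward equation, Chapman–Kolmogorov, symmetry, and
`q_0 = δ`), for every `s > 0`:
`∑_x (∫_0^s (q_u(0,x) - q_u(0,x+1)) du)² = ∫_0^s q_u(0,0) du - ∫_s^{2s} q_u(0,0) du`. -/
theorem stmt2
    (q : ℝ → ℤ → ℤ → ℝ)
    (hq0 : ∀ x y : ℤ, q 0 x y = if x = y then 1 else 0)
    (hpos : ∀ t, 0 ≤ t → ∀ x y : ℤ, 0 ≤ q t x y)
    (hsym : ∀ t, 0 ≤ t → ∀ x y : ℤ, q t x y = q t y x)
    (hker : ∀ t, 0 ≤ t → ∀ x : ℤ, ∑' y : ℤ, q t x y = 1)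
    (hCK : ∀ u v, 0 ≤ u → 0 ≤ v → ∀ x z : ℤ,
      q (u + v) x z = ∑' y : ℤ, q u x y * q v y z)
    (hderiv : ∀ t, 0 ≤ t → ∀ x y : ℤ,
      HasDerivAt (fun r => q r x y) (q t x (y - 1) + q t x (y + 1) - 2 * q t x y) t)
    (s : ℝ) (hs : 0 < s) :
    ∑' x : ℤ, (∫ u in (0:ℝ)..s, (q u 0 x - q u 0 (x + 1))) ^ 2
      = (∫ u in (0:ℝ)..s, q u 0 0) - ∫ u in s..(2 * s), q u 0 0 :=
  stmt2_general q hpos hsym hker hCK hderiv s hs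
end

section
/- Let f: [0,∞) → [0,1] be measurable with lim_{r→∞} √r · f(r) = c for some c > 0. Then for 0 < s < t, lim_{N→∞} N^{−3/2} ∫_{sN}^{tN} ∫_0^{sN} f(u_2 − u_1) du_1 du_2 = (4c/3) · (t^{3/2} − s^{3/2} − (t−s)^{3/2}). -/
/-!
With `F x = ∫₀ˣ f` and `G x = ∫₀ˣ F`, the inner integral is `F u₂ - F (u₂ - sN)`, so the double
integral is `G (tN) - G (sN) - G ((t - s) N)`. Integrating an asymptotic `h x ~ L x ^ p` with
`p > -1` gives `∫₀ˣ h ~ L x ^ (p + 1) / (p + 1)`; applied twice to `f x ~ c x ^ (-1/2)` this yields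
`G x ~ (4c/3) x ^ (3/2)`, and scaling `x = aN` gives the limit.
-/

open Filter Real MeasureTheory Asymptotics intervalIntegral Topology

theorem integral_isLittleO_rpow {g : ℝ → ℝ} {p : ℝ} (hp : -1 < p)
    (hint : ∀ a b : ℝ, IntervalIntegrable g volume a b) (hg : g =o[atTop] (· ^ p)) :
    (fun x => ∫ u in (0:ℝ)..x, g u) =o[atTop] (· ^ (p + 1)) := by
  have hp1 : 0 < p + 1 := by linarith
  rw [isLittleO_iff]
  intro ε hε
  obtain ⟨R₀, hR₀⟩ := eventually_atTop.mp (hg.bound (by positivity : 0 < ε * (p + 1) / 2))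
  set R := max R₀ 0
  set C := |∫ u in (0:ℝ)..R, g u|
  have hC : ∀ᶠ x : ℝ in atTop, 2 * C / ε ≤ x ^ (p + 1) :=
    (tendsto_rpow_atTop hp1).eventually_ge_atTop _
  filter_upwards [eventually_ge_atTop R, hC] with x hRx hCx
  have hx : 0 ≤ x := (le_max_right _ _).trans hRx
  have htail : |∫ u in R..x, g u| ≤ ε / 2 * x ^ (p + 1) := by
    calc |∫ u in R..x, g u| ≤ ∫ u in R..x, |g u| := abs_integral_le_integral_abs hRx
      _ ≤ ∫ u in R..x, ε * (p + 1) / 2 * u ^ p := by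
          refine integral_mono_on hRx (hint R x).abs
            ((intervalIntegral.intervalIntegrable_rpow' hp).const_mul _) fun u hu => ?_
          have hu0 : 0 ≤ u := (le_max_right _ _).trans hu.1
          simpa [abs_of_nonneg (rpow_nonneg hu0 p)] using hR₀ u ((le_max_left _ _).trans hu.1)
      _ = ε / 2 * (x ^ (p + 1) - R ^ (p + 1)) := by
          rw [intervalIntegral.integral_const_mul, integral_rpow (Or.inl hp)]
          field_simp
      _ ≤ ε / 2 * x ^ (p + 1) := by
          gcongr
          linarith [rpow_nonneg (le_max_right R₀ 0) (p + 1)]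
  have hhead : C ≤ ε / 2 * x ^ (p + 1) := by
    rw [div_le_iff₀ hε] at hCx
    linarith
  rw [norm_of_nonneg (rpow_nonneg hx _), Real.norm_eq_abs,
    ← integral_add_adjacent_intervals (hint 0 R) (hint R x)]
  linarith [abs_add_le (∫ u in (0:ℝ)..R, g u) (∫ u in R..x, g u)]

theorem tendsto_integral_div_rpow {h : ℝ → ℝ} {p L : ℝ} (hp : -1 < p)
    (hint : ∀ a b : ℝ, IntervalIntegrable h volume a b)
    (hL : Tendsto (fun x => h x / x ^ p) atTop (𝓝 L)) :
    Tendsto (fun x => (∫ u in (0:ℝ)..x, h u) / x ^ (p + 1)) atTop (𝓝 (L / (p + 1))) := by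
  have hp1 : 0 < p + 1 := by linarith
  have hpow : ∀ a b : ℝ, IntervalIntegrable (fun u => L * u ^ p) volume a b := fun a b =>
    (intervalIntegral.intervalIntegrable_rpow' hp).const_mul L
  have herr : (fun x => h x - L * x ^ p) =o[atTop] (· ^ p) := by
    refine (isLittleO_iff_tendsto' ?_).mpr ?_
    · filter_upwards [eventually_gt_atTop 0] with x hx h0
      exact absurd h0 (rpow_pos_of_pos hx p).ne'
    · refine (tendsto_sub_nhds_zero_iff.mpr hL).congr' ?_
      filter_upwards [eventually_gt_atTop 0] with x hx
      field_simp [(rpow_pos_of_pos hx p).ne']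
  have hmain := (integral_isLittleO_rpow hp (fun a b => (hint a b).sub (hpow a b)) herr)
    |>.tendsto_div_nhds_zero.add_const (L / (p + 1))
  rw [zero_add] at hmain
  refine hmain.congr' ?_
  filter_upwards [eventually_gt_atTop 0] with x hx
  rw [integral_sub (hint 0 x) (hpow 0 x), intervalIntegral.integral_const_mul,
    integral_rpow (Or.inl hp), zero_rpow hp1.ne']
  field_simp [(rpow_pos_of_pos hx (p + 1)).ne']
  ring

noncomputable def secondPrimitive (g : ℝ → ℝ) (x : ℝ) : ℝ :=
  ∫ v in (0:ℝ)..x, ∫ w in (0:ℝ)..v, g w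

theorem integral_integral_comp_sub_eq_secondPrimitive {g : ℝ → ℝ}
    (hint : ∀ a b : ℝ, IntervalIntegrable g volume a b) (a b : ℝ) :
    ∫ u₂ in a..b, ∫ u₁ in (0:ℝ)..a, g (u₂ - u₁)
      = secondPrimitive g b - secondPrimitive g a - secondPrimitive g (b - a) := by
  set F : ℝ → ℝ := fun x => ∫ w in (0:ℝ)..x, g w
  have hF : Continuous F := continuous_primitive hint 0
  have hinner : ∀ u₂, ∫ u₁ in (0:ℝ)..a, g (u₂ - u₁) = F u₂ - F (u₂ - a) := fun u₂ => by
    rw [integral_comp_sub_left g u₂, sub_zero,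
      integral_interval_sub_left (hint 0 u₂) (hint 0 (u₂ - a))]
  simp_rw [hinner]
  rw [integral_sub (hF.intervalIntegrable a b)
      ((by fun_prop : Continuous fun u => F (u - a)).intervalIntegrable a b),
    integral_comp_sub_right F a, sub_self,
    ← integral_interval_sub_left (hF.intervalIntegrable 0 b) (hF.intervalIntegrable 0 a)]
  rfl

theorem tendsto_rpow_mul_comp_mul {G : ℝ → ℝ} {q L : ℝ}
    (hG : Tendsto (fun x => G x / x ^ q) atTop (𝓝 L)) {a : ℝ} (ha : 0 < a) :
    Tendsto (fun N : ℕ => (N : ℝ) ^ (-q) * G (a * N)) atTop (𝓝 (a ^ q * L)) := by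
  refine ((hG.comp (tendsto_natCast_atTop_atTop.const_mul_atTop ha)).const_mul (a ^ q)).congr' ?_
  filter_upwards [eventually_gt_atTop 0] with N hN
  have hN' : (0:ℝ) < N := Nat.cast_pos.mpr hN
  simp only [Function.comp_apply]
  rw [mul_rpow ha.le hN'.le, rpow_neg hN'.le]
  field_simp [(rpow_pos_of_pos ha q).ne', (rpow_pos_of_pos hN' q).ne']

theorem tendsto_secondPrimitive_div_rpow {g : ℝ → ℝ} {c : ℝ}
    (hint : ∀ a b : ℝ, IntervalIntegrable g volume a b)
    (hg : Tendsto (fun x => √x * g x) atTop (𝓝 c)) :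
    Tendsto (fun x => secondPrimitive g x / x ^ (3 / 2 : ℝ)) atTop (𝓝 (4 * c / 3)) := by
  have hg' : Tendsto (fun x => g x / x ^ (-(1 / 2) : ℝ)) atTop (𝓝 c) := by
    refine hg.congr' ?_
    filter_upwards [eventually_gt_atTop 0] with x hx
    rw [rpow_neg hx.le, ← sqrt_eq_rpow, div_inv_eq_mul, mul_comm]
  have hF := tendsto_integral_div_rpow (by norm_num) hint hg'
  rw [show -(1 / 2 : ℝ) + 1 = 1 / 2 by norm_num, show c / (1 / 2) = 2 * c by ring] at hF
  have hG := tendsto_integral_div_rpow (by norm_num)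
    (fun a b => (continuous_primitive hint 0).intervalIntegrable a b) hF
  rwa [show (1 / 2 : ℝ) + 1 = 3 / 2 by norm_num, show 2 * c / (3 / 2) = 4 * c / 3 by ring] at hG

theorem intervalIntegrable_indicator_of_abs_le {f : ℝ → ℝ} {S : Set ℝ} (hS : MeasurableSet S)
    (hf : Measurable f) {C : ℝ} (hC : ∀ r ∈ S, |f r| ≤ C) (a b : ℝ) :
    IntervalIntegrable (S.indicator f) volume a b := by
  refine (intervalIntegrable_const (c := max C 0)).mono_fun'
    (hf.indicator hS).aestronglyMeasurable (ae_of_all _ fun r => ?_)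
  by_cases hr : r ∈ S
  · simpa [hr] using (hC r hr).trans (le_max_left C 0)
  · simp [hr]

theorem integral_integral_comp_sub_eq_indicator_Ici (f : ℝ → ℝ) {a b : ℝ} (ha : 0 ≤ a)
    (hab : a ≤ b) :
    ∫ u₂ in a..b, ∫ u₁ in (0:ℝ)..a, f (u₂ - u₁)
      = ∫ u₂ in a..b, ∫ u₁ in (0:ℝ)..a, (Set.Ici 0).indicator f (u₂ - u₁) := by
  refine integral_congr fun u₂ hu₂ => integral_congr fun u₁ hu₁ => ?_
  rw [Set.uIcc_of_le hab] at hu₂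
  rw [Set.uIcc_of_le ha] at hu₁
  exact (Set.indicator_of_mem (Set.mem_Ici.mpr (by linarith [hu₂.1, hu₁.2])) f).symm

theorem stmt5_general
    (f : ℝ → ℝ) (hmeas : Measurable f)
    (hf : ∀ r, 0 ≤ r → f r ∈ Set.Icc (0 : ℝ) 1)
    (c : ℝ)
    (hlim : Tendsto (fun r => Real.sqrt r * f r) atTop (nhds c))
    (s t : ℝ) (hs : 0 < s) (hst : s < t) :
    Tendsto (fun N : ℕ => (N : ℝ) ^ (-(3 : ℝ) / 2) *
        ∫ u2 in (s * N)..(t * N), ∫ u1 in (0:ℝ)..(s * N), f (u2 - u1))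
      atTop
      (nhds ((4 * c / 3) * (t ^ ((3:ℝ)/2) - s ^ ((3:ℝ)/2) - (t - s) ^ ((3:ℝ)/2)))) := by
  -- `hf` says nothing about `f` on `(-∞, 0)`, which the double integral never samples.
  set g := (Set.Ici 0).indicator f
  have hint : ∀ a b : ℝ, IntervalIntegrable g volume a b :=
    intervalIntegrable_indicator_of_abs_le measurableSet_Ici hmeas fun r hr =>
      abs_le.mpr ⟨by linarith [(hf r hr).1], (hf r hr).2⟩
  have hG : Tendsto (fun x => secondPrimitive g x / x ^ (3 / 2 : ℝ)) atTop (𝓝 (4 * c / 3)) := by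
    refine tendsto_secondPrimitive_div_rpow hint (hlim.congr' ?_)
    filter_upwards [eventually_ge_atTop 0] with r hr
    simp [g, hr]
  have hlimit := ((tendsto_rpow_mul_comp_mul hG (hs.trans hst)).sub
    (tendsto_rpow_mul_comp_mul hG hs)).sub (tendsto_rpow_mul_comp_mul hG (sub_pos.mpr hst))
  rw [neg_div]
  convert hlimit.congr' ?_ using 2
  · ring
  filter_upwards with N
  rw [integral_integral_comp_sub_eq_indicator_Ici f (by positivity) (by gcongr),
    integral_integral_comp_sub_eq_secondPrimitive hint, ← sub_mul]
  ring

/-- If `f : [0,∞) → [0,1]` is measurable with `√r · f(r) → c > 0`, then for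
`0 < s < t`, `N^{-3/2} ∫_{sN}^{tN} ∫_0^{sN} f(u₂-u₁) du₁ du₂
  → (4c/3)(t^{3/2} - s^{3/2} - (t-s)^{3/2})`. -/
theorem stmt5
    (f : ℝ → ℝ) (hmeas : Measurable f)
    (hf : ∀ r, 0 ≤ r → f r ∈ Set.Icc (0 : ℝ) 1)
    (c : ℝ) (hc : 0 < c)
    (hlim : Tendsto (fun r => Real.sqrt r * f r) atTop (nhds c))
    (s t : ℝ) (hs : 0 < s) (hst : s < t) :
    Tendsto (fun N : ℕ => (N : ℝ) ^ (-(3 : ℝ) / 2) *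
        ∫ u2 in (s * N)..(t * N), ∫ u1 in (0:ℝ)..(s * N), f (u2 - u1))
      atTop
      (nhds ((4 * c / 3) * (t ^ ((3:ℝ)/2) - s ^ ((3:ℝ)/2) - (t - s) ^ ((3:ℝ)/2)))) :=
  stmt5_general f hmeas hf c hlim s t hs hst
end

section
/- Let d = 1 and suppose lim_{u→∞} √u · q̂_u(O,O) = 1/√(4πk). Then for 0 < s ≤ t, lim_{N→∞} Cov(N^{−3/4} β^j_{sN}, N^{−3/4} β^j_{tN}) = (2√k p_j(1−p_j)/(3√π)) (t^{3/2} + s^{3/2} − (t−s)^{3/2}). -/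
open MeasureTheory ProbabilityTheory Filter intervalIntegral Real

section stirringAux
open Set

lemma absRpowII {r : ℝ} (hr : -1 < r) (v1 a b : ℝ) :
    IntervalIntegrable (fun x => |x - v1| ^ r) volume a b := by
  have h0 : ∀ d : ℝ, 0 ≤ d → IntervalIntegrable (fun x : ℝ => |x| ^ r) volume 0 d := by
    intro d hd
    refine (intervalIntegrable_rpow' hr (a := 0) (b := d)).congr ?_
    rw [uIoc_of_le hd]
    intro x hx; dsimp only
    rw [abs_of_pos hx.1]
  have hneg : ∀ d : ℝ, 0 ≤ d → IntervalIntegrable (fun x : ℝ => |x| ^ r) volume (-d) 0 := by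
    intro d hd
    have := (IntervalIntegrable.iff_comp_neg).mp (h0 d hd)
    simp only [abs_neg, neg_zero] at this
    exact this.symm
  have base : ∀ c d : ℝ, IntervalIntegrable (fun x : ℝ => |x| ^ r) volume c d := by
    intro c d
    have hc : IntervalIntegrable (fun x : ℝ => |x| ^ r) volume c 0 := by
      rcases le_total 0 c with h | h
      · exact (h0 c h).symm
      · simpa using hneg (-c) (by linarith)
    have hd2 : IntervalIntegrable (fun x : ℝ => |x| ^ r) volume 0 d := by
      rcases le_total 0 d with h | h
      · exact h0 d h
      · simpa using (hneg (-d) (by linarith)).symm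
    exact hc.trans hd2
  have := (base (a - v1) (b - v1)).comp_sub_right v1
  simpa using this

lemma aux_phi {t v1 : ℝ} (h0 : 0 ≤ v1) (h1 : v1 ≤ t) :
    ∫ v2 in (0:ℝ)..t, |v2 - v1| ^ (-(1:ℝ)/2) = 2*Real.sqrt v1 + 2*Real.sqrt (t - v1) := by
  have hr : (-1:ℝ) < -(1:ℝ)/2 := by norm_num
  rw [← intervalIntegral.integral_add_adjacent_intervals
      (absRpowII hr v1 0 v1) (absRpowII hr v1 v1 t)]
  have e1 : ∫ v2 in (0:ℝ)..v1, |v2 - v1| ^ (-(1:ℝ)/2)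
      = ∫ v2 in (0:ℝ)..v1, (v1 - v2) ^ (-(1:ℝ)/2) := by
    apply intervalIntegral.integral_congr
    intro x hx
    rw [uIcc_of_le h0] at hx
    dsimp only
    rw [abs_sub_comm, abs_of_nonneg (sub_nonneg.mpr hx.2)]
  have e2 : ∫ v2 in v1..t, |v2 - v1| ^ (-(1:ℝ)/2)
      = ∫ v2 in v1..t, (v2 - v1) ^ (-(1:ℝ)/2) := by
    apply intervalIntegral.integral_congr
    intro x hx
    rw [uIcc_of_le h1] at hx
    dsimp only
    rw [abs_of_nonneg (sub_nonneg.mpr hx.1)]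
  rw [e1, e2,
    intervalIntegral.integral_comp_sub_left (fun x : ℝ => x ^ (-(1:ℝ)/2)) v1,
    intervalIntegral.integral_comp_sub_right (fun x : ℝ => x ^ (-(1:ℝ)/2)) v1,
    sub_self, sub_zero, integral_rpow (Or.inl hr), integral_rpow (Or.inl hr)]
  rw [Real.sqrt_eq_rpow, Real.sqrt_eq_rpow]
  norm_num
  ring

lemma aux_outer {s t : ℝ} (hs : 0 ≤ s) (hst : s ≤ t) :
    ∫ v1 in (0:ℝ)..s, (2*Real.sqrt v1 + 2*Real.sqrt (t - v1))
      = (4/3) * (s ^ ((3:ℝ)/2) + t ^ ((3:ℝ)/2) - (t - s) ^ ((3:ℝ)/2)) := by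
  have i1 : IntervalIntegrable (fun v1 : ℝ => 2*Real.sqrt v1) volume 0 s :=
    (continuous_const.mul Real.continuous_sqrt).intervalIntegrable 0 s
  have i2 : IntervalIntegrable (fun v1 : ℝ => 2*Real.sqrt (t - v1)) volume 0 s :=
    (continuous_const.mul (Real.continuous_sqrt.comp (continuous_const.sub continuous_id))).intervalIntegrable 0 s
  rw [intervalIntegral.integral_add i1 i2]
  have c1 : ∫ v1 in (0:ℝ)..s, 2*Real.sqrt v1 = 2 * ∫ v1 in (0:ℝ)..s, v1 ^ ((1:ℝ)/2) := by
    rw [intervalIntegral.integral_const_mul]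
    simp_rw [Real.sqrt_eq_rpow]
  have c2 : ∫ v1 in (0:ℝ)..s, 2*Real.sqrt (t - v1) = 2 * ∫ x in (t-s)..t, x ^ ((1:ℝ)/2) := by
    rw [intervalIntegral.integral_const_mul]
    simp_rw [Real.sqrt_eq_rpow]
    rw [intervalIntegral.integral_comp_sub_left (fun x : ℝ => x ^ ((1:ℝ)/2)) t, sub_zero]
  rw [c1, c2, integral_rpow (Or.inl (by norm_num)), integral_rpow (Or.inl (by norm_num))]
  norm_num
  ring
lemma aux_bound (qhat : ℝ → ℝ) (hq01 : ∀ r, 0 ≤ r → qhat r ∈ Set.Icc (0:ℝ) 1) (c0 : ℝ)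
    (hlim : Tendsto (fun u => Real.sqrt u * qhat u) atTop (nhds c0)) :
    ∃ C : ℝ, 0 < C ∧ ∀ u, 0 ≤ u → Real.sqrt u * qhat u ≤ C := by
  have h1 : ∀ᶠ u in atTop, Real.sqrt u * qhat u ≤ c0 + 1 :=
    hlim.eventually (eventually_le_nhds (by linarith))
  obtain ⟨U, hU⟩ := eventually_atTop.mp h1
  have hm : 0 ≤ max (c0+1) (Real.sqrt (max U 0)) :=
    le_max_of_le_right (Real.sqrt_nonneg _)
  refine ⟨max (c0+1) (Real.sqrt (max U 0)) + 1, by linarith, ?_⟩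
  intro u hu
  rcases le_total U u with h | h
  · have := hU u h
    have h2 : c0 + 1 ≤ max (c0+1) (Real.sqrt (max U 0)) := le_max_left _ _
    linarith
  · have h2 : Real.sqrt u * qhat u ≤ Real.sqrt u :=
      mul_le_of_le_one_right (Real.sqrt_nonneg _) (hq01 u hu).2
    have h3 : Real.sqrt u ≤ Real.sqrt (max U 0) :=
      Real.sqrt_le_sqrt (le_max_of_le_left h)
    have h4 : Real.sqrt (max U 0) ≤ max (c0+1) (Real.sqrt (max U 0)) := le_max_right _ _
    linarith

lemma aux_key (qhat : ℝ → ℝ) (hqm : Measurable qhat)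
    (hq01 : ∀ r, 0 ≤ r → qhat r ∈ Set.Icc (0:ℝ) 1)
    (c0 : ℝ)
    (hlim : Tendsto (fun u => Real.sqrt u * qhat u) atTop (nhds c0))
    (s t : ℝ) (hs : 0 < s) (hst : s ≤ t) :
    Tendsto (fun N : ℕ => ∫ v1 in (0:ℝ)..s, ∫ v2 in (0:ℝ)..t,
        Real.sqrt N * qhat (N * |v2 - v1|)) atTop
      (nhds (c0 * ((4/3) * (s ^ ((3:ℝ)/2) + t ^ ((3:ℝ)/2) - (t - s) ^ ((3:ℝ)/2))))) := by
  obtain ⟨C, hC, hCb⟩ := aux_bound qhat hq01 c0 hlim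
  have hs0 : (0:ℝ) ≤ s := hs.le
  have ht0 : (0:ℝ) ≤ t := le_trans hs0 hst
  have hrexp : (-1:ℝ) < -(1:ℝ)/2 := by norm_num
  -- factorization identity
  have factored : ∀ (N : ℕ) (r : ℝ), 0 < r →
      Real.sqrt N * qhat ((N:ℝ) * r)
        = (Real.sqrt ((N:ℝ)*r) * qhat ((N:ℝ)*r)) * r ^ (-(1:ℝ)/2) := by
    intro N r hr
    have h2 : r ^ (-(1:ℝ)/2) = (Real.sqrt r)⁻¹ := by
      rw [Real.sqrt_eq_rpow, ← Real.rpow_neg hr.le]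
      norm_num
    have h3 : Real.sqrt r ≠ 0 := by positivity
    rw [Real.sqrt_mul (Nat.cast_nonneg N), h2]
    field_simp
  -- pointwise limit
  have pointlim : ∀ v1 v2 : ℝ, v2 ≠ v1 →
      Tendsto (fun N : ℕ => Real.sqrt N * qhat ((N:ℝ) * |v2 - v1|)) atTop
        (nhds (c0 * |v2 - v1| ^ (-(1:ℝ)/2))) := by
    intro v1 v2 hne
    have hr : 0 < |v2 - v1| := abs_pos.mpr (sub_ne_zero.mpr hne)
    have t1 : Tendsto (fun N : ℕ => (N:ℝ) * |v2 - v1|) atTop atTop :=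
      (tendsto_natCast_atTop_atTop).atTop_mul_const hr
    have t2 : Tendsto (fun N : ℕ =>
        Real.sqrt ((N:ℝ) * |v2 - v1|) * qhat ((N:ℝ) * |v2 - v1|)) atTop (nhds c0) :=
      hlim.comp t1
    have t3 := t2.mul_const (|v2 - v1| ^ (-(1:ℝ)/2))
    refine t3.congr fun N => (factored N _ hr).symm
  -- a.e. distinctness
  have hne_ae : ∀ v1 : ℝ, ∀ᵐ v2 : ℝ, v2 ≠ v1 := by
    intro v1
    refine ae_iff.mpr ?_
    simp only [not_not]
    have : {a : ℝ | a = v1} = {v1} := rfl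
    rw [this]
    exact Real.volume_singleton
  have hq0 : ∀ (N : ℕ) (r : ℝ), 0 ≤ Real.sqrt N * qhat ((N:ℝ) * r) → True := fun _ _ _ => trivial
  -- measurability of integrand in v2
  have hmeas2 : ∀ (N : ℕ) (v1 : ℝ), Measurable (fun v2 : ℝ =>
      Real.sqrt N * qhat ((N:ℝ) * |v2 - v1|)) := by
    intro N v1
    exact (hqm.comp (((measurable_id.sub measurable_const).abs).const_mul _)).const_mul _
  -- bound on integrand
  have hbnd : ∀ (N : ℕ) (v1 : ℝ), ∀ᵐ v2 : ℝ,
      ‖Real.sqrt N * qhat ((N:ℝ) * |v2 - v1|)‖ ≤ C * |v2 - v1| ^ (-(1:ℝ)/2) := by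
    intro N v1
    filter_upwards [hne_ae v1] with v2 hv2
    have hr : 0 < |v2 - v1| := abs_pos.mpr (sub_ne_zero.mpr hv2)
    have hnn : 0 ≤ Real.sqrt N * qhat ((N:ℝ) * |v2 - v1|) :=
      mul_nonneg (Real.sqrt_nonneg _) (hq01 _ (by positivity)).1
    rw [Real.norm_eq_abs, abs_of_nonneg hnn, factored N _ hr]
    exact mul_le_mul_of_nonneg_right (hCb _ (by positivity)) (Real.rpow_nonneg hr.le _)
  -- integrability of the bound on Ioc 0 t
  have hibnd : ∀ v1 : ℝ, IntegrableOn (fun v2 : ℝ => C * |v2 - v1| ^ (-(1:ℝ)/2))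
      (Set.Ioc (0:ℝ) t) volume :=
    fun v1 => ((absRpowII hrexp v1 0 t).const_mul C).1
  -- inner DCT
  have innerlim : ∀ v1 ∈ Set.Ioc (0:ℝ) s,
      Tendsto (fun N : ℕ => ∫ v2 in Set.Ioc (0:ℝ) t,
          Real.sqrt N * qhat ((N:ℝ) * |v2 - v1|)) atTop
        (nhds (c0 * (2*Real.sqrt v1 + 2*Real.sqrt (t - v1)))) := by
    intro v1 hv1
    have hv10 : 0 ≤ v1 := hv1.1.le
    have hv1t : v1 ≤ t := le_trans hv1.2 hst
    have hDCT := tendsto_integral_of_dominated_convergence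
      (μ := volume.restrict (Set.Ioc (0:ℝ) t))
      (F := fun N (v2 : ℝ) => Real.sqrt N * qhat ((N:ℝ) * |v2 - v1|))
      (f := fun v2 : ℝ => c0 * |v2 - v1| ^ (-(1:ℝ)/2))
      (bound := fun v2 : ℝ => C * |v2 - v1| ^ (-(1:ℝ)/2))
      (fun N => ((hmeas2 N v1).aestronglyMeasurable))
      (hibnd v1)
      (fun N => ae_restrict_of_ae (hbnd N v1))
      (ae_restrict_of_ae ((hne_ae v1).mono fun v2 hv2 => pointlim v1 v2 hv2))
    have hval : ∫ v2 in Set.Ioc (0:ℝ) t, c0 * |v2 - v1| ^ (-(1:ℝ)/2)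
        = c0 * (2*Real.sqrt v1 + 2*Real.sqrt (t - v1)) := by
      rw [← intervalIntegral.integral_of_le ht0, intervalIntegral.integral_const_mul,
        aux_phi hv10 hv1t]
    rwa [hval] at hDCT
  -- outer DCT
  haveI : IsFiniteMeasure (volume.restrict (Set.Ioc (0:ℝ) t)) :=
    ⟨by rw [Measure.restrict_apply_univ]; exact measure_Ioc_lt_top⟩
  haveI : IsFiniteMeasure (volume.restrict (Set.Ioc (0:ℝ) s)) :=
    ⟨by rw [Measure.restrict_apply_univ]; exact measure_Ioc_lt_top⟩
  have houter := tendsto_integral_of_dominated_convergence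
    (μ := volume.restrict (Set.Ioc (0:ℝ) s))
    (F := fun N (v1 : ℝ) => ∫ v2 in Set.Ioc (0:ℝ) t,
        Real.sqrt N * qhat ((N:ℝ) * |v2 - v1|))
    (f := fun v1 : ℝ => c0 * (2*Real.sqrt v1 + 2*Real.sqrt (t - v1)))
    (bound := fun _ : ℝ => C * (2*Real.sqrt t + 2*Real.sqrt t))
    (fun N => by
      have hm : Measurable (fun z : ℝ × ℝ =>
          Real.sqrt N * qhat ((N:ℝ) * |z.2 - z.1|)) :=
        (hqm.comp (((measurable_snd.sub measurable_fst).abs).const_mul _)).const_mul _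
      exact (hm.stronglyMeasurable.integral_prod_right'
        (ν := volume.restrict (Set.Ioc (0:ℝ) t))).aestronglyMeasurable)
    (integrable_const _)
    (fun N => by
      refine (ae_restrict_iff' measurableSet_Ioc).mpr (ae_of_all _ fun v1 hv1 => ?_)
      have hv10 : 0 ≤ v1 := hv1.1.le
      have hv1t : v1 ≤ t := le_trans hv1.2 hst
      have h1 : ‖∫ v2 in Set.Ioc (0:ℝ) t, Real.sqrt N * qhat ((N:ℝ) * |v2 - v1|)‖
          ≤ ∫ v2 in Set.Ioc (0:ℝ) t, C * |v2 - v1| ^ (-(1:ℝ)/2) :=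
        norm_integral_le_of_norm_le (hibnd v1) (ae_restrict_of_ae (hbnd N v1))
      have h2 : ∫ v2 in Set.Ioc (0:ℝ) t, C * |v2 - v1| ^ (-(1:ℝ)/2)
          = C * (2*Real.sqrt v1 + 2*Real.sqrt (t - v1)) := by
        rw [← intervalIntegral.integral_of_le ht0, intervalIntegral.integral_const_mul,
          aux_phi hv10 hv1t]
      have h3 : 2*Real.sqrt v1 + 2*Real.sqrt (t - v1) ≤ 2*Real.sqrt t + 2*Real.sqrt t := by
        have := Real.sqrt_le_sqrt hv1t
        have := Real.sqrt_le_sqrt (show t - v1 ≤ t by linarith)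
        linarith
      calc ‖∫ v2 in Set.Ioc (0:ℝ) t, Real.sqrt N * qhat ((N:ℝ) * |v2 - v1|)‖
          ≤ C * (2*Real.sqrt v1 + 2*Real.sqrt (t - v1)) := by rw [← h2]; exact h1
        _ ≤ C * (2*Real.sqrt t + 2*Real.sqrt t) :=
            mul_le_mul_of_nonneg_left h3 hC.le)
    ((ae_restrict_iff' measurableSet_Ioc).mpr (ae_of_all _ innerlim))
  have hfinal : ∫ v1 in Set.Ioc (0:ℝ) s, c0 * (2*Real.sqrt v1 + 2*Real.sqrt (t - v1))
      = c0 * ((4/3) * (s ^ ((3:ℝ)/2) + t ^ ((3:ℝ)/2) - (t - s) ^ ((3:ℝ)/2))) := by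
    rw [← intervalIntegral.integral_of_le hs0, intervalIntegral.integral_const_mul,
      aux_outer hs0 hst]
  rw [hfinal] at houter
  refine houter.congr fun N => ?_
  rw [intervalIntegral.integral_of_le hs0]
  refine setIntegral_congr_fun measurableSet_Ioc fun v1 _ => ?_
  rw [intervalIntegral.integral_of_le ht0]

lemma aux_mean {Ω : Type} [MeasurableSpace Ω] (μ : Measure Ω) [IsProbabilityMeasure μ]
    (f : ℝ → Ω → ℝ) (hfm : Measurable (fun z : ℝ × Ω => f z.1 z.2))
    (B : ℝ) (hfb : ∀ u ω, ‖f u ω‖ ≤ B)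
    (a : ℝ) (hmz : ∀ u ∈ Set.Ioc (0:ℝ) a, ∫ ω, f u ω ∂μ = 0) :
    ∫ ω, (∫ u in Set.Ioc (0:ℝ) a, f u ω) ∂μ = 0 := by
  haveI : IsFiniteMeasure (volume.restrict (Set.Ioc (0:ℝ) a)) :=
    ⟨by rw [Measure.restrict_apply_univ]; exact measure_Ioc_lt_top⟩
  have hswap : Measurable (fun z : Ω × ℝ => f z.2 z.1) := hfm.comp measurable_swap
  have hint : Integrable (Function.uncurry fun ω u => f u ω)
      (μ.prod (volume.restrict (Set.Ioc (0:ℝ) a))) :=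
    ⟨hswap.aestronglyMeasurable,
      HasFiniteIntegral.of_bounded (C := B) (ae_of_all _ fun z => hfb z.2 z.1)⟩
  rw [MeasureTheory.integral_integral_swap hint]
  rw [setIntegral_congr_fun measurableSet_Ioc (g := fun _ => (0:ℝ)) (fun u hu => hmz u hu)]
  simp

lemma aux_fubini {Ω : Type} [MeasurableSpace Ω] (μ : Measure Ω) [IsProbabilityMeasure μ]
    (f : ℝ → Ω → ℝ) (hfm : Measurable (fun z : ℝ × Ω => f z.1 z.2))
    (B : ℝ) (hB0 : 0 ≤ B) (hfb : ∀ u ω, ‖f u ω‖ ≤ B)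
    (a b : ℝ)
    (V : ℝ → ℝ → ℝ)
    (hV : ∀ u1 u2, u1 ∈ Set.Ioc (0:ℝ) a → u2 ∈ Set.Ioc (0:ℝ) b →
        ∫ ω, f u1 ω * f u2 ω ∂μ = V u1 u2) :
    ∫ ω, (∫ u1 in Set.Ioc (0:ℝ) a, f u1 ω) * (∫ u2 in Set.Ioc (0:ℝ) b, f u2 ω) ∂μ
      = ∫ u1 in Set.Ioc (0:ℝ) a, ∫ u2 in Set.Ioc (0:ℝ) b, V u1 u2 := by
  haveI : IsFiniteMeasure (volume.restrict (Set.Ioc (0:ℝ) a)) :=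
    ⟨by rw [Measure.restrict_apply_univ]; exact measure_Ioc_lt_top⟩
  haveI : IsFiniteMeasure (volume.restrict (Set.Ioc (0:ℝ) b)) :=
    ⟨by rw [Measure.restrict_apply_univ]; exact measure_Ioc_lt_top⟩
  -- rewrite the product of integrals as a double integral
  have e1 : ∀ ω, (∫ u1 in Set.Ioc (0:ℝ) a, f u1 ω) * (∫ u2 in Set.Ioc (0:ℝ) b, f u2 ω)
      = ∫ u1 in Set.Ioc (0:ℝ) a, (∫ u2 in Set.Ioc (0:ℝ) b, f u1 ω * f u2 ω) := by
    intro ω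
    rw [← MeasureTheory.integral_mul_const]
    refine setIntegral_congr_fun measurableSet_Ioc fun u1 _ => ?_
    rw [← MeasureTheory.integral_const_mul]
  simp_rw [e1]
  -- measurability of the inner double functions
  have hm1 : Measurable (fun w : (Ω × ℝ) × ℝ => f w.1.2 w.1.1 * f w.2 w.1.1) := by
    have h1 : Measurable (fun w : (Ω × ℝ) × ℝ => f w.1.2 w.1.1) :=
      hfm.comp ((measurable_fst.snd).prodMk (measurable_fst.fst))
    have h2 : Measurable (fun w : (Ω × ℝ) × ℝ => f w.2 w.1.1) :=
      hfm.comp (measurable_snd.prodMk (measurable_fst.fst))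
    exact h1.mul h2
  have hFm : StronglyMeasurable (fun z : Ω × ℝ =>
      ∫ u2 in Set.Ioc (0:ℝ) b, f z.2 z.1 * f u2 z.1) :=
    hm1.stronglyMeasurable.integral_prod_right'
      (ν := volume.restrict (Set.Ioc (0:ℝ) b))
  -- first swap
  have hint1 : Integrable (Function.uncurry fun ω u1 =>
      ∫ u2 in Set.Ioc (0:ℝ) b, f u1 ω * f u2 ω)
      (μ.prod (volume.restrict (Set.Ioc (0:ℝ) a))) := by
    refine ⟨hFm.aestronglyMeasurable, HasFiniteIntegral.of_bounded
      (C := B * B * (volume (Set.Ioc (0:ℝ) b)).toReal) (ae_of_all _ fun z => ?_)⟩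
    have h := norm_setIntegral_le_of_norm_le_const (μ := volume)
      (s := Set.Ioc (0:ℝ) b) (C := B * B)
      (f := fun u2 => f z.2 z.1 * f u2 z.1) measure_Ioc_lt_top
      (fun u2 _ => by
        rw [norm_mul]
        exact mul_le_mul (hfb _ _) (hfb _ _) (norm_nonneg _) hB0)
    simpa [Measure.real, Function.uncurry] using h
  rw [MeasureTheory.integral_integral_swap hint1]
  refine setIntegral_congr_fun measurableSet_Ioc fun u1 hu1 => ?_
  -- second swap
  have hm2 : Measurable (fun z : Ω × ℝ => f u1 z.1 * f z.2 z.1) := by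
    have h1 : Measurable (fun z : Ω × ℝ => f u1 z.1) :=
      hfm.comp (measurable_const.prodMk measurable_fst)
    have h2 : Measurable (fun z : Ω × ℝ => f z.2 z.1) := hfm.comp measurable_swap
    exact h1.mul h2
  have hint2 : Integrable (Function.uncurry fun ω u2 => f u1 ω * f u2 ω)
      (μ.prod (volume.restrict (Set.Ioc (0:ℝ) b))) :=
    ⟨hm2.aestronglyMeasurable, HasFiniteIntegral.of_bounded (C := B * B)
      (ae_of_all _ fun z => by
        rw [Function.uncurry, norm_mul]
        exact mul_le_mul (hfb _ _) (hfb _ _) (norm_nonneg _) hB0)⟩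
  rw [MeasureTheory.integral_integral_swap hint2]
  exact setIntegral_congr_fun measurableSet_Ioc fun u2 hu2 => hV u1 u2 hu1 hu2

lemma aux_const (k : ℕ) (hk : 1 ≤ k) (p X : ℝ) :
    ((k:ℝ)*p*(1-p)) * ((1 / Real.sqrt (4*Real.pi*k)) * ((4/3) * X))
      = (2*Real.sqrt k * p * (1-p) / (3*Real.sqrt Real.pi)) * X := by
  have hk0 : (0:ℝ) < k := by exact_mod_cast hk
  have hπs : 0 < Real.sqrt Real.pi := Real.sqrt_pos.mpr Real.pi_pos
  have hks : 0 < Real.sqrt k := Real.sqrt_pos.mpr hk0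
  have h4 : Real.sqrt (4*Real.pi*k) = 2 * Real.sqrt Real.pi * Real.sqrt k := by
    rw [show (4:ℝ)*Real.pi*k = (2*Real.sqrt Real.pi*Real.sqrt k)^2 by
      rw [mul_pow, mul_pow, Real.sq_sqrt Real.pi_pos.le, Real.sq_sqrt hk0.le]; ring]
    exact Real.sqrt_sq (by positivity)
  have hkk : (k:ℝ) = Real.sqrt k * Real.sqrt k := (Real.mul_self_sqrt hk0.le).symm
  rw [h4]
  field_simp
  linear_combination (4*p*(1-p)*X) * hkk

end stirringAux

/-- In dimension 1, with `√u q̂_u(O,O) → 1/√(4πk)`, the covariances of the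
rescaled occupation times `N^{-3/4} β_{sN}` of the stationary multi-species stirring process
converge: for `0 < s ≤ t`,
`Cov(N^{-3/4} β_{sN}, N^{-3/4} β_{tN}) → (2√k p(1-p)/(3√π)) (t^{3/2}+s^{3/2}-(t-s)^{3/2})`. -/
theorem stmt16
    (k : ℕ) (hk : 1 ≤ k) (p : ℝ) (hp : p ∈ Set.Ioo (0:ℝ) 1)
    {Ω : Type} [MeasurableSpace Ω] (μ : Measure Ω) [IsProbabilityMeasure μ]
    (η : ℝ → Ω → ℝ)
    (hmeas : Measurable (Function.uncurry η))
    (hbdd : ∀ t ω, η t ω ∈ Set.Icc (0:ℝ) (k:ℝ))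
    (hmean : ∀ t, 0 ≤ t → ∫ ω, η t ω ∂μ = k * p)
    (qhat : ℝ → ℝ) (hqm : Measurable qhat)
    (hq01 : ∀ r, 0 ≤ r → qhat r ∈ Set.Icc (0:ℝ) 1)
    (hcov : ∀ u1 u2 : ℝ, 0 ≤ u1 → 0 ≤ u2 →
      (∫ ω, η u1 ω * η u2 ω ∂μ) - ((k:ℝ) * p) ^ 2 = qhat |u2 - u1| * ((k:ℝ) * p * (1 - p)))
    -- local CLT asymptotics of the return probability of the rate-k walk on ℤ
    (hlim : Tendsto (fun u => Real.sqrt u * qhat u) atTop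
      (nhds (1 / Real.sqrt (4 * Real.pi * k))))
    (β : ℝ → Ω → ℝ)
    (hβ : ∀ t ω, β t ω = ∫ u in (0:ℝ)..t, (η u ω - k * p))
    (s t : ℝ) (hs : 0 < s) (hst : s ≤ t) :
    Tendsto (fun N : ℕ =>
        (∫ ω, ((N:ℝ) ^ (-(3:ℝ)/4) * β (s * N) ω) * ((N:ℝ) ^ (-(3:ℝ)/4) * β (t * N) ω) ∂μ)
          - (∫ ω, (N:ℝ) ^ (-(3:ℝ)/4) * β (s * N) ω ∂μ)
            * (∫ ω, (N:ℝ) ^ (-(3:ℝ)/4) * β (t * N) ω ∂μ))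
      atTop
      (nhds ((2 * Real.sqrt k * p * (1 - p) / (3 * Real.sqrt Real.pi)) *
        (t ^ ((3:ℝ)/2) + s ^ ((3:ℝ)/2) - (t - s) ^ ((3:ℝ)/2)))) := by
  obtain ⟨hp0, hp1⟩ := hp
  have hk1 : (1:ℝ) ≤ (k:ℝ) := by exact_mod_cast hk
  have hkc : (0:ℝ) ≤ (k:ℝ) := by linarith
  set f : ℝ → Ω → ℝ := fun u ω => η u ω - (k:ℝ)*p with hfdef
  have hfm : Measurable (fun z : ℝ × Ω => f z.1 z.2) := hmeas.sub measurable_const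
  set B : ℝ := (k:ℝ) + (k:ℝ)*p with hBdef
  have hB0 : 0 ≤ B := by nlinarith
  have hfb : ∀ u ω, ‖f u ω‖ ≤ B := by
    intro u ω
    obtain ⟨h1, h2⟩ := hbdd u ω
    rw [Real.norm_eq_abs, abs_le]
    constructor <;> simp only [hfdef, hBdef] <;> nlinarith
  have hηm : ∀ u, Measurable fun ω => η u ω :=
    fun u => hmeas.comp (measurable_const.prodMk measurable_id)
  have hηint : ∀ u, Integrable (fun ω => η u ω) μ := by
    intro u
    refine ⟨(hηm u).aestronglyMeasurable, HasFiniteIntegral.of_bounded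
      (C := (k:ℝ)) (ae_of_all _ fun ω => ?_)⟩
    obtain ⟨h1, h2⟩ := hbdd u ω
    rw [Real.norm_eq_abs, abs_le]
    constructor <;> linarith
  have hfmean : ∀ u : ℝ, 0 ≤ u → ∫ ω, f u ω ∂μ = 0 := by
    intro u hu
    simp only [hfdef]
    rw [integral_sub (hηint u) (integrable_const _), hmean u hu, MeasureTheory.integral_const]
    simp
  have hβzero : ∀ a : ℝ, 0 ≤ a → ∫ ω, β a ω ∂μ = 0 := by
    intro a ha
    have hrw : (fun ω => β a ω) = fun ω => ∫ u in Set.Ioc (0:ℝ) a, f u ω := by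
      funext ω
      rw [hβ, intervalIntegral.integral_of_le ha]
    rw [hrw]
    exact aux_mean μ f hfm B hfb a (fun u hu => hfmean u hu.1.le)
  have hcovf : ∀ u1 u2 : ℝ, 0 ≤ u1 → 0 ≤ u2 →
      ∫ ω, f u1 ω * f u2 ω ∂μ = qhat |u2 - u1| * ((k:ℝ)*p*(1-p)) := by
    intro u1 u2 h1 h2
    have hint12 : Integrable (fun ω => η u1 ω * η u2 ω) μ := by
      refine ⟨((hηm u1).mul (hηm u2)).aestronglyMeasurable, HasFiniteIntegral.of_bounded
        (C := (k:ℝ)*(k:ℝ)) (ae_of_all _ fun ω => ?_)⟩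
      obtain ⟨a1, a2⟩ := hbdd u1 ω
      obtain ⟨b1, b2⟩ := hbdd u2 ω
      rw [norm_mul, Real.norm_eq_abs, Real.norm_eq_abs, abs_of_nonneg a1, abs_of_nonneg b1]
      exact mul_le_mul a2 b2 b1 hkc
    have expand : (fun ω => f u1 ω * f u2 ω)
        = fun ω => (η u1 ω * η u2 ω - ((k:ℝ)*p) * η u1 ω)
            - (((k:ℝ)*p) * η u2 ω - ((k:ℝ)*p)*((k:ℝ)*p)) := by
      funext ω
      simp only [hfdef]
      ring
    have iA : Integrable (fun ω => η u1 ω * η u2 ω - ((k:ℝ)*p) * η u1 ω) μ :=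
      hint12.sub ((hηint u1).const_mul _)
    have iB : Integrable (fun ω => ((k:ℝ)*p) * η u2 ω - ((k:ℝ)*p)*((k:ℝ)*p)) μ :=
      ((hηint u2).const_mul _).sub (integrable_const _)
    rw [expand, integral_sub iA iB,
      integral_sub hint12 ((hηint u1).const_mul _),
      integral_sub ((hηint u2).const_mul _) (integrable_const _),
      MeasureTheory.integral_const_mul, MeasureTheory.integral_const_mul, hmean u1 h1, hmean u2 h2,
      MeasureTheory.integral_const]
    simp only [measure_univ, probReal_univ, ENNReal.toReal_one, smul_eq_mul, one_mul]
    have h := hcov u1 u2 h1 h2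
    rw [pow_two] at h
    linarith
  have hββ : ∀ a b : ℝ, 0 ≤ a → 0 ≤ b → ∫ ω, β a ω * β b ω ∂μ
      = ∫ u1 in Set.Ioc (0:ℝ) a, ∫ u2 in Set.Ioc (0:ℝ) b,
          qhat |u2 - u1| * ((k:ℝ)*p*(1-p)) := by
    intro a b ha hb
    have hrw : (fun ω => β a ω * β b ω)
        = fun ω => (∫ u1 in Set.Ioc (0:ℝ) a, f u1 ω) * (∫ u2 in Set.Ioc (0:ℝ) b, f u2 ω) := by
      funext ω
      rw [hβ, hβ, intervalIntegral.integral_of_le ha, intervalIntegral.integral_of_le hb]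
    rw [hrw]
    exact aux_fubini μ f hfm B hB0 hfb a b _
      (fun u1 u2 hu1 hu2 => hcovf u1 u2 hu1.1.le hu2.1.le)
  -- the limit
  have key := (aux_key qhat hqm hq01 _ hlim s t hs hst).const_mul ((k:ℝ)*p*(1-p))
  rw [aux_const k hk p (s ^ ((3:ℝ)/2) + t ^ ((3:ℝ)/2) - (t - s) ^ ((3:ℝ)/2))] at key
  have htarget : (2*Real.sqrt k * p * (1-p) / (3*Real.sqrt Real.pi)) *
        (s ^ ((3:ℝ)/2) + t ^ ((3:ℝ)/2) - (t - s) ^ ((3:ℝ)/2))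
      = (2 * Real.sqrt k * p * (1 - p) / (3 * Real.sqrt Real.pi)) *
        (t ^ ((3:ℝ)/2) + s ^ ((3:ℝ)/2) - (t - s) ^ ((3:ℝ)/2)) := by ring
  rw [htarget] at key
  refine key.congr' ?_
  rw [eventuallyEq_iff_exists_mem]
  refine ⟨{N : ℕ | 1 ≤ N}, mem_atTop 1, fun N hN => ?_⟩
  dsimp only
  have hN1 : 1 ≤ N := hN
  have hN0 : (0:ℝ) < N := by exact_mod_cast hN1
  have hsN : (0:ℝ) ≤ s * N := by positivity
  have htN : (0:ℝ) ≤ t * N := by nlinarith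
  -- the centering terms vanish
  have hzs : ∫ ω, (N:ℝ) ^ (-(3:ℝ)/4) * β (s * N) ω ∂μ = 0 := by
    rw [MeasureTheory.integral_const_mul, hβzero _ hsN, mul_zero]
  have hzt : ∫ ω, (N:ℝ) ^ (-(3:ℝ)/4) * β (t * N) ω ∂μ = 0 := by
    rw [MeasureTheory.integral_const_mul, hβzero _ htN, mul_zero]
  rw [hzs, hzt, mul_zero, sub_zero]
  -- pull out the normalization
  have hrw2 : (fun ω => ((N:ℝ) ^ (-(3:ℝ)/4) * β (s * N) ω) * ((N:ℝ) ^ (-(3:ℝ)/4) * β (t * N) ω))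
      = fun ω => ((N:ℝ) ^ (-(3:ℝ)/4))^2 * (β (s * N) ω * β (t * N) ω) := by
    funext ω; ring
  rw [hrw2, MeasureTheory.integral_const_mul, hββ _ _ hsN htN]
  -- pull out the covariance constant from the double integral
  have hpull : ∫ u1 in Set.Ioc (0:ℝ) (s*N), ∫ u2 in Set.Ioc (0:ℝ) (t*N),
        qhat |u2 - u1| * ((k:ℝ)*p*(1-p))
      = (∫ u1 in (0:ℝ)..(s*N), ∫ u2 in (0:ℝ)..(t*N), qhat |u2 - u1|) * ((k:ℝ)*p*(1-p)) := by
    rw [← intervalIntegral.integral_of_le hsN, ← intervalIntegral.integral_mul_const]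
    refine intervalIntegral.integral_congr fun u1 _ => ?_
    rw [← intervalIntegral.integral_of_le htN, ← intervalIntegral.integral_mul_const]
  rw [hpull]
  -- substitution u = N v
  have hNne : (N:ℝ) ≠ 0 := hN0.ne'
  have houter := smul_integral_comp_mul_right
    (fun u1 => ∫ u2 in (0:ℝ)..(t*N), qhat |u2 - u1|) (a := 0) (b := s) (N:ℝ)
  rw [zero_mul] at houter
  have hinner : ∀ v1 : ℝ, (∫ u2 in (0:ℝ)..(t*N), qhat |u2 - v1 * (N:ℝ)|)
      = (N:ℝ) * ∫ v2 in (0:ℝ)..t, qhat ((N:ℝ) * |v2 - v1|) := by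
    intro v1
    have h := smul_integral_comp_mul_right
      (fun u2 => qhat |u2 - v1 * (N:ℝ)|) (a := 0) (b := t) (N:ℝ)
    rw [zero_mul] at h
    rw [← h, smul_eq_mul]
    congr 1
    refine intervalIntegral.integral_congr fun x _ => ?_
    congr 1
    rw [show x * (N:ℝ) - v1 * N = (x - v1) * N by ring, abs_mul, abs_of_nonneg hN0.le]
    ring
  have hsub : (∫ u1 in (0:ℝ)..(s*N), ∫ u2 in (0:ℝ)..(t*N), qhat |u2 - u1|)
      = (N:ℝ)^2 * ∫ v1 in (0:ℝ)..s, ∫ v2 in (0:ℝ)..t, qhat ((N:ℝ) * |v2 - v1|) := by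
    rw [← houter, smul_eq_mul]
    have : (∫ v1 in (0:ℝ)..s, (fun u1 => ∫ u2 in (0:ℝ)..(t*N), qhat |u2 - u1|) (v1 * (N:ℝ)))
        = ∫ v1 in (0:ℝ)..s, (N:ℝ) * ∫ v2 in (0:ℝ)..t, qhat ((N:ℝ) * |v2 - v1|) :=
      intervalIntegral.integral_congr fun v1 _ => hinner v1
    rw [this, intervalIntegral.integral_const_mul]
    ring
  rw [hsub]
  -- identify the power of N with √N
  have hcN : ((N:ℝ) ^ (-(3:ℝ)/4))^2 * (N:ℝ)^2 = Real.sqrt N := by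
    rw [← Real.rpow_natCast ((N:ℝ) ^ (-(3:ℝ)/4)) 2, ← Real.rpow_natCast (N:ℝ) 2,
      ← Real.rpow_mul (Nat.cast_nonneg N), ← Real.rpow_add hN0, Real.sqrt_eq_rpow]
    norm_num
  have hpush : Real.sqrt (N:ℝ) * (∫ v1 in (0:ℝ)..s, ∫ v2 in (0:ℝ)..t, qhat ((N:ℝ) * |v2 - v1|))
      = ∫ v1 in (0:ℝ)..s, ∫ v2 in (0:ℝ)..t, Real.sqrt (N:ℝ) * qhat ((N:ℝ) * |v2 - v1|) := by
    rw [← intervalIntegral.integral_const_mul]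
    refine intervalIntegral.integral_congr fun v1 _ => ?_
    rw [← intervalIntegral.integral_const_mul]
  calc ((k:ℝ)*p*(1-p)) * (∫ v1 in (0:ℝ)..s, ∫ v2 in (0:ℝ)..t,
        Real.sqrt (N:ℝ) * qhat ((N:ℝ) * |v2 - v1|))
      = ((k:ℝ)*p*(1-p)) * (Real.sqrt (N:ℝ) *
          ∫ v1 in (0:ℝ)..s, ∫ v2 in (0:ℝ)..t, qhat ((N:ℝ) * |v2 - v1|)) := by rw [hpush]
    _ = ((N:ℝ) ^ (-(3:ℝ)/4))^2 * ((N:ℝ)^2 *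
          (∫ v1 in (0:ℝ)..s, ∫ v2 in (0:ℝ)..t, qhat ((N:ℝ) * |v2 - v1|)) * ((k:ℝ)*p*(1-p))) := by
        rw [← hcN]; ring
end
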